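/- (Obstacle shadow from the analytic solution of Example 1.) Let 0 < v < v_o, r > 0, and m = √(v_o² − v²)/v. For t ≥ 0 define the moving square obstacle O_t = { (x,y) ∈ ℝ² : |x| ≤ r and |y + v_o t| ≤ r }. Let φ : [0,∞) → ℝ² be any path satisfying ‖φ(t) − φ(s)‖ ≤ v·|t − s| for all s, t ≥ 0 (vehicle with maximum speed v), with initial condition φ(0) = (x₀, y₀) where |x₀| ≤ r, y₀ ≤ −r, and −r − y₀ < m(r − |x₀|) (i.e., the initial position lies in the triangular shadow region directly below the obstacle). Then the vehicle cannot avoid the obstacle: there exists t ≥ 0 such that φ(t) ∈ O_t. -/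
import Mathlib

set_option maxHeartbeats 1000000


/-- A vehicle of maximum speed `v` starting in the triangular "shadow" region directly
below a square obstacle of half-side `r` that moves downward with speed `v_o > v`
cannot avoid the obstacle. -/
theorem obstacle_shadow (v vo r : ℝ) (hv : 0 < v) (hvo : v < vo) (hr : 0 < r)
    (φ : ℝ → EuclideanSpace ℝ (Fin 2))
    (hspeed : ∀ s t : ℝ, 0 ≤ s → 0 ≤ t → ‖φ t - φ s‖ ≤ v * |t - s|)
    (hx0 : |φ 0 0| ≤ r) (hy0 : φ 0 1 ≤ -r)
    (hshadow : -r - φ 0 1 < (Real.sqrt (vo ^ 2 - v ^ 2) / v) * (r - |φ 0 0|)) :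
    ∃ t : ℝ, 0 ≤ t ∧ |φ t 0| ≤ r ∧ |φ t 1 + vo * t| ≤ r := by
  have hd : 0 < vo ^ 2 - v ^ 2 := by nlinarith
  set m' := Real.sqrt (vo ^ 2 - v ^ 2) with hm'
  have hm'sq : m' ^ 2 = vo ^ 2 - v ^ 2 := Real.sq_sqrt hd.le
  have hm'pos : 0 < m' := Real.sqrt_pos.mpr hd
  set a := -r - φ 0 1 with ha
  have ha0 : 0 ≤ a := by simp only [ha]; linarith
  set b := r - |φ 0 0| with hb
  clear_value m' a b
  have hab : a * v < m' * b := by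
    calc a * v < (m' / v * b) * v := mul_lt_mul_of_pos_right hshadow hv
    _ = m' * b := by field_simp
  have hbpos : 0 < b := by
    have hmb : 0 < m' * b := lt_of_le_of_lt (mul_nonneg ha0 hv.le) hab
    nlinarith [hm'pos]
  -- coordinate facts
  have coord : ∀ w : EuclideanSpace ℝ (Fin 2), (w 0) ^ 2 + (w 1) ^ 2 = ‖w‖ ^ 2 := by
    intro w
    rw [EuclideanSpace.norm_eq, Real.sq_sqrt (by positivity)]
    simp [Fin.sum_univ_two, sq_abs]
  have coord1 : ∀ w : EuclideanSpace ℝ (Fin 2), |w 1| ≤ ‖w‖ := by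
    intro w
    nlinarith [coord w, sq_nonneg (w 0), norm_nonneg w, abs_nonneg (w 1), sq_abs (w 1)]
  have hsub : ∀ s t : ℝ, ∀ i : Fin 2, (φ t - φ s) i = φ t i - φ s i := by
    intro s t i; rfl
  -- y-coordinate speed bound
  have hyspeed : ∀ s t : ℝ, 0 ≤ s → 0 ≤ t → |φ t 1 - φ s 1| ≤ v * |t - s| := by
    intro s t hs ht
    have := coord1 (φ t - φ s)
    rw [hsub] at this
    exact this.trans (hspeed s t hs ht)
  set t1 := a / (vo - v) with ht1
  clear_value t1
  have ht1nn : 0 ≤ t1 := by rw [ht1]; exact div_nonneg ha0 (by linarith)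
  set h : ℝ → ℝ := fun t => φ t 1 + vo * t + r with hh
  clear_value h
  have hh0 : h 0 ≤ 0 := by simp only [hh]; simp; linarith
  have hht1 : 0 ≤ h t1 := by
    have h1 := hyspeed 0 t1 le_rfl ht1nn
    have h2 : |t1 - 0| = t1 := by rw [sub_zero, abs_of_nonneg ht1nn]
    rw [h2] at h1
    have h3 : φ 0 1 - v * t1 ≤ φ t1 1 := by
      have := abs_le.mp h1
      linarith [this.1]
    have h4 : (vo - v) * t1 = a := by
      rw [ht1, mul_comm, div_mul_cancel₀ a (by linarith : vo - v ≠ 0)]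
    simp only [hh]
    nlinarith
  have hcont : ContinuousOn h (Set.Icc 0 t1) := by
    have hl : LipschitzOnWith (Real.toNNReal v) (fun t => φ t 1) (Set.Icc 0 t1) := by
      apply LipschitzOnWith.of_dist_le_mul
      intro s hs t ht
      rw [Real.dist_eq, Real.dist_eq, Real.coe_toNNReal _ hv.le]
      exact hyspeed t s ht.1 hs.1
    rw [hh]
    exact (hl.continuousOn.add ((continuous_const.mul continuous_id).continuousOn)).add continuousOn_const
  obtain ⟨T, hT, hhT⟩ : ∃ T ∈ Set.Icc 0 t1, h T = 0 := by
    have := intermediate_value_Icc ht1nn hcont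
    have h0mem : (0 : ℝ) ∈ Set.Icc (h 0) (h t1) := ⟨hh0, hht1⟩
    obtain ⟨T, hT, hhT⟩ := this h0mem
    exact ⟨T, hT, hhT⟩
  clear hcont
  have hTnn : 0 ≤ T := hT.1
  have hyT : φ T 1 = -vo * T - r := by simp only [hh] at hhT; linarith
  -- norm bound at time T
  have hnorm := hspeed 0 T le_rfl hTnn
  rw [sub_zero, abs_of_nonneg hTnn] at hnorm
  have hsq := coord (φ T - φ 0)
  rw [hsub, hsub] at hsq
  have hnn : ‖φ T - φ 0‖ ^ 2 ≤ (v * T) ^ 2 := by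
    have := norm_nonneg (φ T - φ 0)
    nlinarith
  have hdy : φ T 1 - φ 0 1 = a - vo * T := by rw [hyT]; simp only [ha]; ring
  have hkey : (φ T 0 - φ 0 0) ^ 2 ≤ v ^ 2 * T ^ 2 - (a - vo * T) ^ 2 := by
    rw [← hdy]; nlinarith
  -- maximize the quadratic:  (vo²-v²)·RHS ≤ a²v²
  have hmax : (vo ^ 2 - v ^ 2) * (v ^ 2 * T ^ 2 - (a - vo * T) ^ 2) ≤ a ^ 2 * v ^ 2 := by
    nlinarith [sq_nonneg ((vo ^ 2 - v ^ 2) * T - a * vo)]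
  have hdx2 : (vo ^ 2 - v ^ 2) * (φ T 0 - φ 0 0) ^ 2 < (vo ^ 2 - v ^ 2) * b ^ 2 := by
    have h5 : a ^ 2 * v ^ 2 < (m' * b) ^ 2 := by
      nlinarith [mul_nonneg ha0 hv.le, mul_pos hm'pos hbpos]
    have h6 : (m' * b) ^ 2 = (vo ^ 2 - v ^ 2) * b ^ 2 := by
      rw [mul_pow, hm'sq]
    have h9 : (vo ^ 2 - v ^ 2) * (φ T 0 - φ 0 0) ^ 2 ≤
        (vo ^ 2 - v ^ 2) * (v ^ 2 * T ^ 2 - (a - vo * T) ^ 2) :=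
      mul_le_mul_of_nonneg_left hkey hd.le
    linarith
  have hdx : |φ T 0 - φ 0 0| < b := by
    have h7 : (φ T 0 - φ 0 0) ^ 2 < b ^ 2 := (mul_lt_mul_iff_right₀ hd).mp hdx2
    nlinarith [abs_nonneg (φ T 0 - φ 0 0), sq_abs (φ T 0 - φ 0 0)]
  refine ⟨T, hTnn, ?_, ?_⟩
  · have := abs_sub_abs_le_abs_sub (φ T 0) (φ 0 0)
    have h8 : |φ T 0| ≤ |φ 0 0| + |φ T 0 - φ 0 0| := by
      have := abs_sub (φ T 0) (φ 0 0)
      linarith [abs_sub_abs_le_abs_sub (φ T 0) (φ 0 0)]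
    simp only [hb] at hdx
    linarith
  · rw [hyT]
    have : -vo * T - r + vo * T = -r := by ring
    rw [this, abs_neg, abs_of_nonneg hr.le]
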